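/- arXiv:2105.09241 — 2 statements merged into one kernel-verified Lean document; each statement's English description precedes it below -/
import Mathlib

section
/- Assume f satisfies the relative smoothness condition with constants μ_d(f) and L_d(f), let L ≥ L_d(f), let x̄ ∈ int(dom ψ) be one of the points z_1, …, z_m ∈ dom ψ, let δ ≥ 0, let λ̄ ∈ Δ_m satisfy ⟨λ̄ − λ, f_* − Gᵀ x_+⟩ ≤ δ for all λ ∈ Δ_m, where x_+ = y*_L(L∇d(x̄) − Gλ̄). Then for every y ∈ dom ψ satisfying β_d(z_i, y) ≥ β_d(x̄, y) for all i = 1, …, m: β_d(x_+, y) ≤ (1 − μ_d(f)/L) β_d(x̄, y) + (1/L)[F(y) − F(x_+) + δ], where F = f + ψ. -/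
/-!
Since `x₊` maximizes `⟨L∇d(x̄) − Gλ̄, ·⟩ − L d − ψ` on `dom ψ`, it satisfies the variational
inequality `ψ(x₊) − ψ(y) ≤ ⟨L∇d(x₊) − L∇d(x̄) + Gλ̄, y − x₊⟩`. The three-point identity
`β(x̄,y) = β(x̄,x₊) + β(x₊,y) + ⟨∇d(x₊) − ∇d(x̄), y − x₊⟩` turns this into a bound on
`L β(x₊,y)` involving `⟨Gλ̄, y − x₊⟩`. The lower relative-smoothness bounds at the `z_i`,
weakened to `μ β(x̄,y)` by the hypothesis on `y` and averaged with weights `λ̄`, bound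
`⟨Gλ̄, y⟩`; testing stationarity against the vertex `e_j` (where `z_j = x̄`) and applying upper
relative smoothness between `x̄` and `x₊` (with `L_d(f) ≤ L` and `β(x̄,x₊) ≥ 0`) absorbs the
remaining terms into `−f(x₊)`.
-/

open Set Filter Topology

section FirstOrder

variable {E : Type*} [NormedAddCommGroup E] [NormedSpace ℝ E]
  {φ : E → ℝ} {D : E →L[ℝ] ℝ} {x v : E}

theorem HasFDerivAt.le_apply_of_add_mul_le (hφ : HasFDerivAt φ D x) {a : ℝ}
    (h : ∀ t ∈ Ioo (0 : ℝ) 1, φ x + t * a ≤ φ (x + t • v)) : a ≤ D v := by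
  have hline : HasDerivAt (fun t : ℝ => φ (x + t • v)) (D v) 0 := by
    refine HasFDerivAt.comp_hasDerivAt (0 : ℝ) (by simpa using hφ) ?_
    simpa using ((hasDerivAt_id (0 : ℝ)).smul_const v).const_add x
  have hslope : Tendsto (slope (fun t : ℝ => φ (x + t • v)) 0) (𝓝[>] 0) (𝓝 (D v)) :=
    (hasDerivAt_iff_tendsto_slope.mp hline).mono_left
      (nhdsWithin_mono _ fun t ht => ne_of_gt ht)
  refine ge_of_tendsto hslope ?_
  filter_upwards [Ioo_mem_nhdsGT (zero_lt_one' ℝ)] with t ht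
  rw [slope_def_field, sub_zero, zero_smul, add_zero, le_div_iff₀ ht.1]
  linarith [h t ht]

theorem HasFDerivAt.apply_le_of_le_add_mul (hφ : HasFDerivAt φ D x) {b : ℝ}
    (h : ∀ t ∈ Ioo (0 : ℝ) 1, φ (x + t • v) ≤ φ x + t * b) : D v ≤ b := by
  have := hφ.neg.le_apply_of_add_mul_le (a := -b) fun t ht => by
    simp only [Pi.neg_apply]
    linarith [h t ht]
  simpa using this

theorem ConvexOn.apply_sub_le_of_hasFDerivAt {s : Set E} {y : E} (hφc : ConvexOn ℝ s φ)
    (hx : x ∈ s) (hy : y ∈ s) (hφ : HasFDerivAt φ D x) : D (y - x) ≤ φ y - φ x := by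
  refine hφ.apply_le_of_le_add_mul fun t ht => ?_
  have hseg : x + t • (y - x) = (1 - t) • x + t • y := by module
  have hconv := hφc.2 hx hy (by linarith [ht.2]) ht.1.le (sub_add_cancel 1 t)
  simp only [smul_eq_mul] at hconv
  rw [hseg]
  linarith

theorem IsMinOn.sub_le_apply_of_hasFDerivAt {s : Set E} {ψ : E → ℝ} {y : E}
    (hmin : IsMinOn (φ + ψ) s x) (hs : Convex ℝ s) (hψ : ConvexOn ℝ s ψ)
    (hx : x ∈ s) (hy : y ∈ s) (hφ : HasFDerivAt φ D x) : ψ x - ψ y ≤ D (y - x) := by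
  refine hφ.le_apply_of_add_mul_le fun t ht => ?_
  have hseg : x + t • (y - x) = (1 - t) • x + t • y := by module
  have hmem : (1 - t) • x + t • y ∈ s :=
    hs hx hy (by linarith [ht.2]) ht.1.le (sub_add_cancel 1 t)
  have hopt := isMinOn_iff.mp hmin _ hmem
  have hconv := hψ.2 hx hy (by linarith [ht.2]) ht.1.le (sub_add_cancel 1 t)
  simp only [Pi.add_apply, smul_eq_mul] at hopt hconv
  rw [hseg]
  linarith

end FirstOrder

section Bregman

variable {E : Type*} [NormedAddCommGroup E] [NormedSpace ℝ E]

def bregman (d : E → ℝ) (d' : E → E →L[ℝ] ℝ) (x y : E) : ℝ :=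
  d y - d x - d' x (y - x)

variable {d : E → ℝ} {d' : E → E →L[ℝ] ℝ}

theorem bregman_nonneg {s : Set E} {x y : E} (hd : ConvexOn ℝ s d) (hx : x ∈ s) (hy : y ∈ s)
    (hd' : HasFDerivAt d (d' x) x) : 0 ≤ bregman d d' x y :=
  sub_nonneg.mpr (hd.apply_sub_le_of_hasFDerivAt hx hy hd')

theorem bregman_eq_add_add (x y z : E) :
    bregman d d' x y = bregman d d' x z + bregman d d' z y + (d' z - d' x) (y - z) := by
  have hsplit : d' x (y - x) = d' x (y - z) + d' x (z - x) := by
    rw [← map_add, sub_add_sub_cancel]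
  simp only [bregman, sub_apply, hsplit]
  ring

end Bregman

theorem sum_smul_apply_sub_le {E ι : Type*} [NormedAddCommGroup E] [NormedSpace ℝ E]
    [Fintype ι] {f : E → ℝ} {f' : E → E →L[ℝ] ℝ} {z : ι → E} {w : ι → ℝ}
    (hw : w ∈ stdSimplex ℝ ι) {x y : E} {K : ℝ} (h : ∀ i, f (z i) + f' (z i) (y - z i) ≤ K) :
    (∑ i, w i • f' (z i)) (y - x) ≤ K + ∑ i, w i * (f' (z i) (z i) - f (z i) - f' (z i) x) := by
  calc (∑ i, w i • f' (z i)) (y - x) = ∑ i, w i * f' (z i) (y - x) := by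
        simp only [sum_apply, smul_apply, smul_eq_mul]
    _ ≤ ∑ i, w i * (K + (f' (z i) (z i) - f (z i) - f' (z i) x)) := by
        refine Finset.sum_le_sum fun i _ => mul_le_mul_of_nonneg_left ?_ (hw.1 i)
        have := h i
        simp only [map_sub] at this ⊢
        linarith
    _ = K + ∑ i, w i * (f' (z i) (z i) - f (z i) - f' (z i) x) := by
        simp only [mul_add, Finset.sum_add_distrib, ← Finset.sum_mul, hw.2, one_mul]

theorem gmm_th_Step_item2_general
    {E : Type*} [NormedAddCommGroup E] [NormedSpace ℝ E]
    -- `Sd = dom d`, `U = dom f` (open), `S = dom ψ`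
    (Sd U S : Set E) (hSU : S ⊆ U) (hUSd : U ⊆ Sd) (hUopen : IsOpen U) (hSconv : Convex ℝ S)
    (d f ψ : E → ℝ) (d' f' : E → E →L[ℝ] ℝ)
    (hdconv : StrictConvexOn ℝ Sd d)
    (hd' : ∀ x ∈ interior Sd, HasFDerivAt d (d' x) x)
    (hψconv : ConvexOn ℝ S ψ)
    -- Bregman distance of `d`
    (β : E → E → ℝ) (hβ : ∀ x y, β x y = d y - d x - (d' x) (y - x))
    -- relative smoothness of `f` with constants `0 ≤ μ_d(f) ≤ L_d(f)`
    (μ Lf : ℝ) (hμ0 : 0 ≤ μ)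
    (hsmooth : ∀ x ∈ U, ∀ y ∈ U,
      μ * β x y ≤ f y - f x - (f' x) (y - x) ∧ f y - f x - (f' x) (y - x) ≤ Lf * β x y)
    (L δ : ℝ) (hL0 : 0 < L) (hL : Lf ≤ L)
    -- the bundle `z₁, …, z_m ∈ dom ψ`, containing `x̄ ∈ int(dom ψ)`
    (m : ℕ) (z : Fin m → E) (hzS : ∀ i, z i ∈ S)
    (xbar : E) (hxbar : xbar ∈ interior S) (j : Fin m) (hj : z j = xbar)
    (lam : Fin m → ℝ) (hlam : lam ∈ stdSimplex ℝ (Fin m))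
    -- `x₊ = y*_L(L∇d(x̄) − Gλ̄)`
    (xplus : E) (hxpS : xplus ∈ S) (hxpint : xplus ∈ interior Sd)
    (hxp : ∀ y ∈ S,
      (L • d' xbar - ∑ i, lam i • f' (z i)) y - L * d y - ψ y ≤
      (L • d' xbar - ∑ i, lam i • f' (z i)) xplus - L * d xplus - ψ xplus)
    -- approximate stationarity: `⟨λ̄ − λ, f_* − Gᵀ x₊⟩ ≤ δ` for all `λ ∈ Δ_m`
    (hstat : ∀ ν ∈ stdSimplex ℝ (Fin m),
      ∑ i, (lam i - ν i) * ((f' (z i)) (z i) - f (z i) - (f' (z i)) xplus) ≤ δ) :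
    ∀ y ∈ S, (∀ i, β xbar y ≤ β (z i) y) →
      β xplus y ≤ (1 - μ / L) * β xbar y +
        (1 / L) * ((f y + ψ y) - (f xplus + ψ xplus) + δ) := by
  intro y hyS hby
  obtain rfl : β = bregman d d' := funext₂ hβ
  have hxbarS : xbar ∈ S := interior_subset hxbar
  have hxbarInt : xbar ∈ interior Sd := interior_maximal hUSd hUopen (hSU hxbarS)
  set G := ∑ i, lam i • f' (z i)
  have hopt : ψ xplus - ψ y ≤ (L • d' xplus - (L • d' xbar - G)) (y - xplus) :=
    IsMinOn.sub_le_apply_of_hasFDerivAt (φ := fun w => L * d w - (L • d' xbar - G) w)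
      (isMinOn_iff.mpr fun w hw => by simp only [Pi.add_apply]; linarith [hxp w hw])
      hSconv hψconv hxpS hyS (((hd' _ hxpint).const_mul L).sub (L • d' xbar - G).hasFDerivAt)
  have hmodel : G (y - xplus) ≤ _ := sum_smul_apply_sub_le hlam fun i => by
    have hlow := (hsmooth (z i) (hSU (hzS i)) y (hSU hyS)).1
    have := mul_le_mul_of_nonneg_left (hby i) hμ0
    show f (z i) + f' (z i) (y - z i) ≤ f y - μ * bregman d d' xbar y
    linarith
  have hvertex := hstat _ (single_mem_stdSimplex ℝ j)
  simp only [sub_mul, Finset.sum_sub_distrib, Pi.single_apply, ite_mul, one_mul, zero_mul,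
    Finset.sum_ite_eq', Finset.mem_univ, if_true, hj] at hvertex
  have hupper := (hsmooth xbar (hSU hxbarS) xplus (hSU hxpS)).2
  have hβ_nonneg := bregman_nonneg hdconv.convexOn (interior_subset hxbarInt)
    (interior_subset hxpint) (hd' _ hxbarInt)
  have hthree := bregman_eq_add_add (d := d) (d' := d') xbar y xplus
  have key : L * bregman d d' xplus y ≤
      (L - μ) * bregman d d' xbar y + ((f y + ψ y) - (f xplus + ψ xplus) + δ) := by
    simp only [sub_apply, smul_apply, smul_eq_mul] at hopt hthree
    rw [map_sub] at hupper
    linear_combination (-L) * hthree + hopt + hmodel + hvertex + hupper +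
      mul_le_mul_of_nonneg_right hL hβ_nonneg
  rw [show (1 - μ / L) * bregman d d' xbar y + 1 / L * ((f y + ψ y) - (f xplus + ψ xplus) + δ)
      = ((L - μ) * bregman d d' xbar y + ((f y + ψ y) - (f xplus + ψ xplus) + δ)) / L by
    field_simp, le_div_iff₀ hL0]
  linarith

/-- Theorem `th-Step`, item 2, of "Gradient Methods with Memory".

One step of the Inexact Gradient Method with Memory with `L ≥ L_d(f)`:
for every `y ∈ dom ψ` with `β_d(z_i, y) ≥ β_d(x̄, y)` for all `i`,
`β_d(x₊, y) ≤ (1 − μ_d(f)/L) β_d(x̄, y) + (1/L)[F(y) − F(x₊) + δ]`. -/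
theorem gmm_th_Step_item2
    {E : Type*} [NormedAddCommGroup E] [NormedSpace ℝ E] [FiniteDimensional ℝ E]
    -- `Sd = dom d`, `U = dom f` (open), `S = dom ψ`
    (Sd U S : Set E) (hSU : S ⊆ U) (hUSd : U ⊆ Sd) (hUopen : IsOpen U) (hSconv : Convex ℝ S)
    (d f ψ : E → ℝ) (d' f' : E → E →L[ℝ] ℝ)
    (hdconv : StrictConvexOn ℝ Sd d)
    (hd' : ∀ x ∈ interior Sd, HasFDerivAt d (d' x) x)
    (hf' : ∀ x ∈ U, HasFDerivAt f (f' x) x)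
    (hfconv : ConvexOn ℝ U f)
    (hψconv : ConvexOn ℝ S ψ)
    -- Bregman distance of `d`
    (β : E → E → ℝ) (hβ : ∀ x y, β x y = d y - d x - (d' x) (y - x))
    -- relative smoothness of `f` with constants `0 ≤ μ_d(f) ≤ L_d(f)`
    (μ Lf : ℝ) (hμ0 : 0 ≤ μ) (hμLf : μ ≤ Lf)
    (hsmooth : ∀ x ∈ U, ∀ y ∈ U,
      μ * β x y ≤ f y - f x - (f' x) (y - x) ∧ f y - f x - (f' x) (y - x) ≤ Lf * β x y)
    (L δ : ℝ) (hL0 : 0 < L) (hL : Lf ≤ L) (hδ : 0 ≤ δ)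
    -- the bundle `z₁, …, z_m ∈ dom ψ`, containing `x̄ ∈ int(dom ψ)`
    (m : ℕ) (hm : 0 < m) (z : Fin m → E) (hzS : ∀ i, z i ∈ S)
    (xbar : E) (hxbar : xbar ∈ interior S) (j : Fin m) (hj : z j = xbar)
    (lam : Fin m → ℝ) (hlam : lam ∈ stdSimplex ℝ (Fin m))
    -- `x₊ = y*_L(L∇d(x̄) − Gλ̄)`
    (xplus : E) (hxpS : xplus ∈ S) (hxpint : xplus ∈ interior Sd)
    (hxp : ∀ y ∈ S,
      (L • d' xbar - ∑ i, lam i • f' (z i)) y - L * d y - ψ y ≤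
      (L • d' xbar - ∑ i, lam i • f' (z i)) xplus - L * d xplus - ψ xplus)
    -- approximate stationarity: `⟨λ̄ − λ, f_* − Gᵀ x₊⟩ ≤ δ` for all `λ ∈ Δ_m`
    (hstat : ∀ ν ∈ stdSimplex ℝ (Fin m),
      ∑ i, (lam i - ν i) * ((f' (z i)) (z i) - f (z i) - (f' (z i)) xplus) ≤ δ) :
    ∀ y ∈ S, (∀ i, β xbar y ≤ β (z i) y) →
      β xplus y ≤ (1 - μ / L) * β xbar y +
        (1 / L) * ((f y + ψ y) - (f xplus + ψ xplus) + δ) :=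
  gmm_th_Step_item2_general Sd U S hSU hUSd hUopen hSconv d f ψ d' f' hdconv hd' hψconv β hβ μ Lf
    hμ0 hsmooth L δ hL0 hL m z hzS xbar hxbar j hj lam hlam xplus hxpS hxpint hxp hstat
end

section
/- Assume f satisfies the relative smoothness condition with constants μ_d(f) and L_d(f), let L > 0, let x̄ ∈ int(dom ψ) be one of the points z_1, …, z_m ∈ dom ψ, let δ ≥ 0, let λ̄ ∈ Δ_m satisfy ⟨λ̄ − λ, f_* − Gᵀ x_+⟩ ≤ δ for all λ ∈ Δ_m, where x_+ = y*_L(L∇d(x̄) − Gλ̄). If instead of L ≥ L_d(f) one assumes the relaxed condition max_{1≤i≤m} [f_i + ⟨g_i, x_+ − z_i⟩] + L β_d(x̄, x_+) ≥ f(x_+), then for every y ∈ dom ψ: β_d(x_+, y) ≤ β_d(x̄, y) + (1/L)[F(y) − F(x_+) + δ], where F = f + ψ. -/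
/-!
By optimality of `x₊` and the first-order condition,
`L ⟨∇d(x̄) − ∇d(x₊), y − x₊⟩ ≤ ⟨Gλ̄, y − x₊⟩ + ψ(y) − ψ(x₊)`, and the three-point identity turns
the left side into `L (β(x₊, y) − β(x̄, y) + β(x̄, x₊))`. Each linearization
`f_i + ⟨g_i, · − z_i⟩` lies below `f`, so `⟨Gλ̄, y − x₊⟩ ≤ f(y) + ⟨λ̄, f_* − Gᵀx₊⟩`. Testing
δ-stationarity at the vertex of `Δ_m` where `max_i [f_i + ⟨g_i, x₊ − z_i⟩]` is attained bounds the
last term by `δ − max_i [⋯]`, and the relaxed condition bounds that by `δ + L β(x̄, x₊) − f(x₊)`.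
-/

open Set

section FirstOrder

variable {E : Type*} [NormedAddCommGroup E] [NormedSpace ℝ E]

theorem HasFDerivAt.le_apply_of_forall_mul_le {g : E → ℝ} {g' : E →L[ℝ] ℝ} {x v : E} {c : ℝ}
    (hg : HasFDerivAt g g' x) (h : ∀ t ∈ Ioc (0 : ℝ) 1, c * t ≤ g (x + t • v) - g x) :
    c ≤ g' v := by
  have hline : HasDerivAt (fun t : ℝ => g (x + t • v)) (g' v) 0 := by
    have hg0 : HasFDerivAt g g' (x + (0 : ℝ) • v) := by simpa using hg
    exact hg0.comp_hasDerivAt 0 (by simpa using ((hasDerivAt_id (0 : ℝ)).smul_const v).const_add x)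
  have hslope := (hasDerivAt_iff_tendsto_slope.mp hline).mono_left
    (nhdsWithin_mono _ fun t (ht : t ∈ Ioi (0 : ℝ)) => ne_of_gt ht)
  refine ge_of_tendsto hslope ?_
  filter_upwards [Ioc_mem_nhdsGT (zero_lt_one' ℝ)] with t ht
  rw [slope_def_field, sub_zero, zero_smul, add_zero, le_div_iff₀ ht.1]
  exact h t ht

theorem ConvexOn.apply_add_smul_sub_le {s : Set E} {f : E → ℝ} (hf : ConvexOn ℝ s f)
    {x y : E} (hx : x ∈ s) (hy : y ∈ s) {t : ℝ} (ht : t ∈ Icc (0 : ℝ) 1) :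
    f (x + t • (y - x)) ≤ f x + t * (f y - f x) := by
  have h := hf.2 hx hy (sub_nonneg.2 ht.2) ht.1 (sub_add_cancel 1 t)
  rw [show (1 - t) • x + t • y = x + t • (y - x) by module, smul_eq_mul, smul_eq_mul] at h
  linarith

theorem ConvexOn.hasFDerivAt_apply_sub_le {s : Set E} {f : E → ℝ} {f' : E →L[ℝ] ℝ}
    (hf : ConvexOn ℝ s f) {x y : E} (hx : x ∈ s) (hy : y ∈ s) (hf' : HasFDerivAt f f' x) :
    f' (y - x) ≤ f y - f x := by
  have h := hf'.neg.le_apply_of_forall_mul_le (v := y - x) (c := -(f y - f x)) fun t ht => by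
    have := hf.apply_add_smul_sub_le hx hy (Ioc_subset_Icc_self ht)
    simp only [Pi.neg_apply]
    linarith
  simp only [neg_apply] at h
  linarith

theorem IsMinOn.hasFDerivAt_apply_sub_add_sub_nonneg {s : Set E} {g h : E → ℝ}
    {g' : E →L[ℝ] ℝ} {x y : E} (hmin : IsMinOn (fun w => g w + h w) s x) (hh : ConvexOn ℝ s h)
    (hx : x ∈ s) (hy : y ∈ s) (hg : HasFDerivAt g g' x) :
    0 ≤ g' (y - x) + (h y - h x) := by
  have key := hg.le_apply_of_forall_mul_le (v := y - x) (c := -(h y - h x)) fun t ht => by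
    have hmem := hh.1.add_smul_sub_mem hx hy (Ioc_subset_Icc_self ht)
    have hconv := hh.apply_add_smul_sub_le hx hy (Ioc_subset_Icc_self ht)
    have hle : g x + h x ≤ _ := isMinOn_iff.mp hmin _ hmem
    linarith
  linarith

theorem bregman_three_point {d : E → ℝ} {d' : E → E →L[ℝ] ℝ} {β : E → E → ℝ}
    (hβ : ∀ x y, β x y = d y - d x - d' x (y - x)) (x y z : E) :
    β x y - β z y + β z x = d' z (y - x) - d' x (y - x) := by
  simp only [hβ, map_sub]
  ring

end FirstOrder

section Bundle

variable {E ι : Type*} [NormedAddCommGroup E] [NormedSpace ℝ E] [Fintype ι]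
  {U : Set E} {f : E → ℝ} {f' : E → E →L[ℝ] ℝ} {z : ι → E} {lam : ι → ℝ}

theorem ConvexOn.sum_mul_linearization_le (hf : ConvexOn ℝ U f)
    (hf' : ∀ i, HasFDerivAt f (f' (z i)) (z i)) (hz : ∀ i, z i ∈ U) {y : E} (hy : y ∈ U)
    (hlam : lam ∈ stdSimplex ℝ ι) :
    ∑ i, lam i * (f (z i) + f' (z i) (y - z i)) ≤ f y := calc
  _ ≤ ∑ i, lam i * f y := Finset.sum_le_sum fun i _ => mul_le_mul_of_nonneg_left
      (by linarith [hf.hasFDerivAt_apply_sub_le (hz i) hy (hf' i)]) (hlam.1 i)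
  _ = f y := by rw [← Finset.sum_mul, hlam.2, one_mul]

theorem ConvexOn.sum_mul_apply_sub_le (hf : ConvexOn ℝ U f)
    (hf' : ∀ i, HasFDerivAt f (f' (z i)) (z i)) (hz : ∀ i, z i ∈ U) {x y : E} (hy : y ∈ U)
    (hlam : lam ∈ stdSimplex ℝ ι) {r δ : ℝ}
    (hstat : ∀ ν ∈ stdSimplex ℝ ι,
      ∑ i, (lam i - ν i) * (f' (z i) (z i) - f (z i) - f' (z i) x) ≤ δ)
    (hrelax : f x ≤ (⨆ i, (f (z i) + f' (z i) (x - z i))) + r) :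
    ∑ i, lam i * f' (z i) (y - x) ≤ f y - f x + r + δ := by
  classical
  have : Nonempty ι := by
    refine (isEmpty_or_nonempty ι).resolve_left fun _ => ?_
    simp [stdSimplex_of_isEmpty_index] at hlam
  obtain ⟨k, hk⟩ := exists_eq_ciSup_of_finite (f := fun i => f (z i) + f' (z i) (x - z i))
  have hvertex := hstat _ (single_mem_stdSimplex ℝ k)
  simp only [sub_mul, Finset.sum_sub_distrib, Pi.single_apply, ite_mul, one_mul, zero_mul,
    Finset.sum_ite_eq', Finset.mem_univ, if_true] at hvertex
  have hsplit : ∑ i, lam i * f' (z i) (y - x) = ∑ i, lam i * (f (z i) + f' (z i) (y - z i)) +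
      ∑ i, lam i * (f' (z i) (z i) - f (z i) - f' (z i) x) := by
    rw [← Finset.sum_add_distrib]
    refine Finset.sum_congr rfl fun i _ => ?_
    simp only [map_sub]
    ring
  have hmodel := hf.sum_mul_linearization_le hf' hz hy hlam
  simp only [map_sub] at hk hrelax hvertex
  linarith

end Bundle

theorem gmm_rm_Step_general
    {E : Type*} [NormedAddCommGroup E] [NormedSpace ℝ E]
    -- `Sd = dom d`, `U = dom f` (open), `S = dom ψ`
    (Sd U S : Set E) (hSU : S ⊆ U)
    (d f ψ : E → ℝ) (d' f' : E → E →L[ℝ] ℝ)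
    (hd' : ∀ x ∈ interior Sd, HasFDerivAt d (d' x) x)
    (hf' : ∀ x ∈ U, HasFDerivAt f (f' x) x)
    (hfconv : ConvexOn ℝ U f)
    (hψconv : ConvexOn ℝ S ψ)
    -- Bregman distance of `d`
    (β : E → E → ℝ) (hβ : ∀ x y, β x y = d y - d x - (d' x) (y - x))
    (L δ : ℝ) (hL0 : 0 < L)
    -- the bundle `z₁, …, z_m ∈ dom ψ`, containing `x̄ ∈ int(dom ψ)`
    (m : ℕ) (z : Fin m → E) (hzS : ∀ i, z i ∈ S)
    (xbar : E)
    (lam : Fin m → ℝ) (hlam : lam ∈ stdSimplex ℝ (Fin m))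
    -- `x₊ = y*_L(L∇d(x̄) − Gλ̄)`
    (xplus : E) (hxpS : xplus ∈ S) (hxpint : xplus ∈ interior Sd)
    (hxp : ∀ y ∈ S,
      (L • d' xbar - ∑ i, lam i • f' (z i)) y - L * d y - ψ y ≤
      (L • d' xbar - ∑ i, lam i • f' (z i)) xplus - L * d xplus - ψ xplus)
    -- approximate stationarity: `⟨λ̄ − λ, f_* − Gᵀ x₊⟩ ≤ δ` for all `λ ∈ Δ_m`
    (hstat : ∀ ν ∈ stdSimplex ℝ (Fin m),
      ∑ i, (lam i - ν i) * ((f' (z i)) (z i) - f (z i) - (f' (z i)) xplus) ≤ δ)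
    -- the relaxed condition replacing `L ≥ L_d(f)`:
    (hrelax : f xplus ≤
      (⨆ i : Fin m, (f (z i) + (f' (z i)) (xplus - z i))) + L * β xbar xplus) :
    ∀ y ∈ S,
      β xplus y ≤ β xbar y + (1 / L) * ((f y + ψ y) - (f xplus + ψ xplus) + δ) := by
  intro y hy
  set T : E →L[ℝ] ℝ := L • d' xbar - ∑ i, lam i • f' (z i)
  have hmodel := hfconv.sum_mul_apply_sub_le (fun i => hf' _ (hSU (hzS i))) (fun i => hSU (hzS i))
    (hSU hy) hlam hstat hrelax
  have hopt := IsMinOn.hasFDerivAt_apply_sub_add_sub_nonneg (g := fun w => L * d w - T w)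
    (isMinOn_iff.mpr fun w hw => by linarith [hxp w hw]) hψconv hxpS hy
    (((hd' xplus hxpint).const_mul L).sub T.hasFDerivAt)
  have hbregman := bregman_three_point hβ xplus y xbar
  simp only [T, sub_apply, smul_apply, sum_apply, smul_eq_mul] at hopt
  rw [← sub_le_iff_le_add', one_div, inv_mul_eq_div, le_div_iff₀ hL0]
  linear_combination hopt + hmodel + L * hbregman

/-- Remark `rm-Step` of "Gradient Methods with Memory".

Theorem `th-Step`, item 1, remains valid if the condition `L ≥ L_d(f)` is replaced by the
relaxed condition `max_i [f_i + ⟨g_i, x₊ − z_i⟩] + L β_d(x̄, x₊) ≥ f(x₊)`. -/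
theorem gmm_rm_Step
    {E : Type*} [NormedAddCommGroup E] [NormedSpace ℝ E] [FiniteDimensional ℝ E]
    -- `Sd = dom d`, `U = dom f` (open), `S = dom ψ`
    (Sd U S : Set E) (hSU : S ⊆ U) (hUSd : U ⊆ Sd) (hUopen : IsOpen U) (hSconv : Convex ℝ S)
    (d f ψ : E → ℝ) (d' f' : E → E →L[ℝ] ℝ)
    (hdconv : StrictConvexOn ℝ Sd d)
    (hd' : ∀ x ∈ interior Sd, HasFDerivAt d (d' x) x)
    (hf' : ∀ x ∈ U, HasFDerivAt f (f' x) x)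
    (hfconv : ConvexOn ℝ U f)
    (hψconv : ConvexOn ℝ S ψ)
    -- Bregman distance of `d`
    (β : E → E → ℝ) (hβ : ∀ x y, β x y = d y - d x - (d' x) (y - x))
    -- relative smoothness of `f` with constants `0 ≤ μ_d(f) ≤ L_d(f)`
    (μ Lf : ℝ) (hμ0 : 0 ≤ μ) (hμLf : μ ≤ Lf)
    (hsmooth : ∀ x ∈ U, ∀ y ∈ U,
      μ * β x y ≤ f y - f x - (f' x) (y - x) ∧ f y - f x - (f' x) (y - x) ≤ Lf * β x y)
    (L δ : ℝ) (hL0 : 0 < L) (hδ : 0 ≤ δ)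
    -- the bundle `z₁, …, z_m ∈ dom ψ`, containing `x̄ ∈ int(dom ψ)`
    (m : ℕ) (hm : 0 < m) (z : Fin m → E) (hzS : ∀ i, z i ∈ S)
    (xbar : E) (hxbar : xbar ∈ interior S) (j : Fin m) (hj : z j = xbar)
    (lam : Fin m → ℝ) (hlam : lam ∈ stdSimplex ℝ (Fin m))
    -- `x₊ = y*_L(L∇d(x̄) − Gλ̄)`
    (xplus : E) (hxpS : xplus ∈ S) (hxpint : xplus ∈ interior Sd)
    (hxp : ∀ y ∈ S,
      (L • d' xbar - ∑ i, lam i • f' (z i)) y - L * d y - ψ y ≤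
      (L • d' xbar - ∑ i, lam i • f' (z i)) xplus - L * d xplus - ψ xplus)
    -- approximate stationarity: `⟨λ̄ − λ, f_* − Gᵀ x₊⟩ ≤ δ` for all `λ ∈ Δ_m`
    (hstat : ∀ ν ∈ stdSimplex ℝ (Fin m),
      ∑ i, (lam i - ν i) * ((f' (z i)) (z i) - f (z i) - (f' (z i)) xplus) ≤ δ)
    -- the relaxed condition replacing `L ≥ L_d(f)`:
    (hrelax : f xplus ≤
      (⨆ i : Fin m, (f (z i) + (f' (z i)) (xplus - z i))) + L * β xbar xplus) :
    ∀ y ∈ S,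
      β xplus y ≤ β xbar y + (1 / L) * ((f y + ψ y) - (f xplus + ψ xplus) + δ) :=
  gmm_rm_Step_general Sd U S hSU d f ψ d' f' hd' hf' hfconv hψconv β hβ L δ hL0 m z hzS xbar lam
    hlam xplus hxpS hxpint hxp hstat hrelax
end
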